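/- Let Y ∈ H be non-isotropic (g(Y,Y) ≠ 0). Then the composition (γ̌[Y])^r : Symᵣ(U) → Symᵣ(conj(U)*), given in components by Ψ^{A₁…Aᵣ} ↦ 2^{r/2}·Ψ^{A₁…Aᵣ}·Y_{A₁Ȧ₁}·…·Y_{AᵣȦᵣ}, is a linear isomorphism. -/
import Mathlib


open Matrix

noncomputable section

abbrev U2 := Fin 2 → ℂ
abbrev M2 := Matrix (Fin 2) (Fin 2) ℂ

def epsBil (c : ℂ) (u v : U2) : ℂ := c * (u 0 * v 1 - u 1 * v 0)

def epsLow (c : ℂ) : M2 := c • !![0, 1; -1, 0]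

def outerH (u : U2) : M2 := fun A B => u A * star (u B)

def IsHerm (M : M2) : Prop := Mᴴ = M

/-- Index lowering `Y_{AȦ} = ε_{BA}·conj(ε)_{ḂȦ}·Y^{BḂ}`. -/
def lowerT (c : ℂ) (Y : M2) : M2 :=
  fun ad bd => ∑ a, ∑ b, epsLow c a ad * star (epsLow c b bd) * Y a b

/-- Symmetric tensors of rank r over a 2-dimensional space (components model):
`Sym_r(U)` and `Sym_r(conj(U)*)` are both realized inside
`(Fin r → Fin 2) → ℂ`. -/
def symSet (r : ℕ) : Set ((Fin r → Fin 2) → ℂ) :=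
  {T | ∀ σ : Equiv.Perm (Fin r), ∀ f, T (f ∘ σ) = T f}

/-- The r-fold composite `(γ̌[Y])^r : Sym_r(U) → Sym_r(conj(U)*)`,
`Ψ ↦ 2^{r/2}·Ψ^{A₁…Aᵣ}·Y_{A₁Ȧ₁}·…·Y_{AᵣȦᵣ}` (lowering all indices). -/
def lowerAll (c : ℂ) (Y : M2) (r : ℕ)
    (Ψ : (Fin r → Fin 2) → ℂ) : (Fin r → Fin 2) → ℂ :=
  fun fd => (Real.sqrt 2 : ℂ) ^ r *
    ∑ f : Fin r → Fin 2, (∏ i, lowerT c Y (f i) (fd i)) * Ψ f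

namespace LAux

/-- The general "rank-r tensor power of a matrix, times a constant" map. -/
def Tmap (r : ℕ) (N : M2) (k : ℂ) (Ψ : (Fin r → Fin 2) → ℂ) : (Fin r → Fin 2) → ℂ :=
  fun fd => k * ∑ f : Fin r → Fin 2, (∏ i, N (f i) (fd i)) * Ψ f

lemma Tmap_one (r : ℕ) (Ψ : (Fin r → Fin 2) → ℂ) : Tmap r 1 1 Ψ = Ψ := by
  funext fd
  unfold Tmap
  rw [one_mul, Finset.sum_eq_single fd]
  · simp [Matrix.one_apply]
  · intro f _ hf
    obtain ⟨i, hi⟩ := Function.ne_iff.mp hf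
    rw [Finset.prod_eq_zero (Finset.mem_univ i) (by simp [Matrix.one_apply, hi]), zero_mul]
  · simp

lemma Tmap_comp (r : ℕ) (N N' : M2) (k k' : ℂ) (Ψ : (Fin r → Fin 2) → ℂ) :
    Tmap r N k (Tmap r N' k' Ψ) = Tmap r (N' * N) (k * k') Ψ := by
  funext fd
  unfold Tmap
  have h1 : ∀ gg : Fin r → Fin 2,
      (∑ f : Fin r → Fin 2, ∏ i, (N' (gg i) (f i) * N (f i) (fd i)))
        = ∏ i, (N' * N) (gg i) (fd i) := by
    intro gg
    simp only [Matrix.mul_apply]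
    rw [Finset.prod_univ_sum]
    simp [Fintype.piFinset_univ]
  calc k * ∑ f : Fin r → Fin 2, (∏ i, N (f i) (fd i)) *
          (k' * ∑ gg : Fin r → Fin 2, (∏ i, N' (gg i) (f i)) * Ψ gg)
      = (k * k') * ∑ f : Fin r → Fin 2, ∑ gg : Fin r → Fin 2,
          (∏ i, N' (gg i) (f i) * N (f i) (fd i)) * Ψ gg := by
        simp only [Finset.mul_sum]
        apply Finset.sum_congr rfl
        intro f _
        apply Finset.sum_congr rfl
        intro gg _
        rw [Finset.prod_mul_distrib]
        ring
    _ = (k * k') * ∑ gg : Fin r → Fin 2,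
          (∏ i, (N' * N) (gg i) (fd i)) * Ψ gg := by
        rw [Finset.sum_comm]
        congr 1
        apply Finset.sum_congr rfl
        intro gg _
        rw [← Finset.sum_mul, h1]

lemma Tmap_mapsTo (r : ℕ) (N : M2) (k : ℂ) :
    Set.MapsTo (Tmap r N k) (symSet r) (symSet r) := by
  intro Ψ hΨ σ fd
  unfold Tmap
  congr 1
  refine Fintype.sum_equiv (Equiv.arrowCongr σ (Equiv.refl (Fin 2))) _ _ ?_
  intro f
  have he : (Equiv.arrowCongr σ (Equiv.refl (Fin 2))) f = f ∘ ⇑σ.symm := rfl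
  rw [he]
  have hΨ' : Ψ (f ∘ ⇑σ.symm) = Ψ f := hΨ σ⁻¹ f
  rw [hΨ']
  congr 1
  rw [← Equiv.prod_comp σ (fun i => N ((f ∘ ⇑(Equiv.symm σ)) i) (fd i))]
  simp [Function.comp]

end LAux

/- STATEMENT 16: if Y ∈ H is non-isotropic (g(Y,Y) ≠ 0) then the composite
(γ̌[Y])^r : Sym_r(U) → Sym_r(conj(U)*) is a linear isomorphism. -/
theorem lowerAll_isomorphism (c : ℂ) (hc : c ≠ 0) (r : ℕ)
    (g : M2 → M2 → ℂ)
    (hg1 : ∀ M N P : M2, g (M + N) P = g M P + g N P)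
    (hg2 : ∀ M N P : M2, g M (N + P) = g M N + g M P)
    (hg3 : ∀ (t : ℝ) (M N : M2), g (t • M) N = t • g M N)
    (hg4 : ∀ (t : ℝ) (M N : M2), g M (t • N) = t • g M N)
    (hg : ∀ u v : U2, g (outerH u) (outerH v)
        = epsBil c u v * star (epsBil c u v))
    (Y : M2) (hY : IsHerm Y) (hiso : g Y Y ≠ 0) :
    -- linearity
    (∀ (a : ℂ) (Ψ Φ : (Fin r → Fin 2) → ℂ),
      lowerAll c Y r (a • Ψ + Φ) = a • lowerAll c Y r Ψ + lowerAll c Y r Φ) ∧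
    -- bijectivity from Sym_r(U) onto Sym_r(conj(U)*)
    Set.BijOn (lowerAll c Y r) (symSet r) (symSet r) := by
  -- Step 1: `g Y Y = 2·c·c̄·det Y`, hence `det Y ≠ 0`.
  have hent : ∀ i j, Y j i = star (Y i j) := by
    intro i j
    have := congrFun (congrFun hY j) i
    simpa [Matrix.conjTranspose_apply] using this.symm
  set A := (Y 0 0).re with hA
  set B := (Y 1 1).re with hB
  set X := (Y 0 1).re with hX
  set W := (Y 0 1).im with hW
  have h00 : Y 0 0 = (A : ℂ) := by
    have := hent 0 0
    apply Complex.ext <;> simp [hA]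
    · exact (Complex.conj_eq_iff_im.mp this.symm)
  have h11 : Y 1 1 = (B : ℂ) := by
    have := hent 1 1
    apply Complex.ext <;> simp [hB]
    · exact (Complex.conj_eq_iff_im.mp this.symm)
  have h01 : Y 0 1 = (X : ℂ) + (W : ℂ) * Complex.I := by
    rw [hX, hW, Complex.re_add_im]
  have h10 : Y 1 0 = (X : ℂ) - (W : ℂ) * Complex.I := by
    rw [hent 0 1, h01]
    simp [Complex.ext_iff]
  have gval : ∀ u v : U2, g (outerH u) (outerH v)
      = (c * star c) * ((u 0 * v 1 - u 1 * v 0) * star (u 0 * v 1 - u 1 * v 0)) := by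
    intro u v
    rw [hg]
    unfold epsBil
    rw [star_mul']
    ring
  have hdec : Y = ((A - X + W) : ℝ) • outerH ![1,0] + (((B - X + W) : ℝ) • outerH ![0,1]
      + ((X : ℝ) • outerH ![1,1] + ((-W) : ℝ) • outerH ![1, Complex.I])) := by
    apply Matrix.ext
    intro i j
    fin_cases i <;> fin_cases j
    · show Y 0 0 = _
      rw [h00]
      simp [outerH, Matrix.add_apply, Matrix.smul_apply, Complex.real_smul,
        Complex.star_def, Complex.conj_I]
      try push_cast
      try ring
    · show Y 0 1 = _
      rw [h01]
      simp [outerH, Matrix.add_apply, Matrix.smul_apply, Complex.real_smul,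
        Complex.star_def, Complex.conj_I]
      try push_cast
      try ring
    · show Y 1 0 = _
      rw [h10]
      simp [outerH, Matrix.add_apply, Matrix.smul_apply, Complex.real_smul,
        Complex.star_def, Complex.conj_I]
      try push_cast
      try ring
    · show Y 1 1 = _
      rw [h11]
      simp [outerH, Matrix.add_apply, Matrix.smul_apply, Complex.real_smul,
        Complex.star_def, Complex.conj_I]
      try push_cast
      try ring
  have key : g Y Y = (2 * (c * star c)) * Y.det := by
    have hdet : Y.det = (A : ℂ) * B - ((X : ℂ)^2 + (W : ℂ)^2) := by
      rw [Matrix.det_fin_two, h00, h11, h01, h10]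
      ring_nf
      rw [Complex.I_sq]
      ring
    rw [hdet]
    rw [hdec]
    simp only [hg1, hg2, hg3, hg4, gval]
    simp only [Matrix.cons_val_zero, Matrix.cons_val_one, Matrix.head_cons,
      Complex.real_smul, Complex.star_def, map_sub, _root_.map_mul,
      Complex.conj_I, Complex.conj_ofReal, _root_.map_one, _root_.map_zero]
    push_cast
    ring_nf
    rw [Complex.I_sq]
    ring
  have hdY : Y.det ≠ 0 := by
    intro h
    apply hiso
    rw [key, h, mul_zero]
  -- Step 2: the lowered matrix is invertible.
  have hLT : lowerT c Y = (epsLow c)ᵀ * Y * (epsLow c).map star := by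
    ext ad bd
    simp [lowerT, Matrix.mul_apply, Matrix.transpose_apply, Matrix.map_apply,
      Fin.sum_univ_two]
    ring
  have d1 : (epsLow c).det = c ^ 2 := by
    simp [epsLow, Matrix.det_fin_two, Matrix.smul_apply]
    ring
  have d2 : ((epsLow c).map star).det = star c ^ 2 := by
    simp [epsLow, Matrix.det_fin_two, Matrix.map_apply, Matrix.smul_apply, star_mul']
    ring
  have hdN : (lowerT c Y).det ≠ 0 := by
    rw [hLT, Matrix.det_mul, Matrix.det_mul, Matrix.det_transpose, d1, d2]
    exact mul_ne_zero (mul_ne_zero (pow_ne_zero _ hc) hdY)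
      (pow_ne_zero _ (star_ne_zero.mpr hc))
  have hdNu : IsUnit (lowerT c Y).det := isUnit_iff_ne_zero.mpr hdN
  have hNinv1 : lowerT c Y * (lowerT c Y)⁻¹ = 1 := Matrix.mul_nonsing_inv _ hdNu
  have hNinv2 : (lowerT c Y)⁻¹ * lowerT c Y = 1 := Matrix.nonsing_inv_mul _ hdNu
  have hk : ((Real.sqrt 2 : ℂ)) ^ r ≠ 0 := by
    apply pow_ne_zero
    rw [Complex.ofReal_ne_zero]
    positivity
  -- `lowerAll` is `Tmap` with the lowered matrix.
  have hlA : lowerAll c Y r = LAux.Tmap r (lowerT c Y) ((Real.sqrt 2 : ℂ) ^ r) := rfl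
  have hli : ∀ Ψ : (Fin r → Fin 2) → ℂ,
      LAux.Tmap r (lowerT c Y)⁻¹ ((Real.sqrt 2 : ℂ) ^ r)⁻¹
        (LAux.Tmap r (lowerT c Y) ((Real.sqrt 2 : ℂ) ^ r) Ψ) = Ψ := by
    intro Ψ
    rw [LAux.Tmap_comp, hNinv1, inv_mul_cancel₀ hk, LAux.Tmap_one]
  have hri : ∀ Φ : (Fin r → Fin 2) → ℂ,
      LAux.Tmap r (lowerT c Y) ((Real.sqrt 2 : ℂ) ^ r)
        (LAux.Tmap r (lowerT c Y)⁻¹ ((Real.sqrt 2 : ℂ) ^ r)⁻¹ Φ) = Φ := by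
    intro Φ
    rw [LAux.Tmap_comp, hNinv2, mul_inv_cancel₀ hk, LAux.Tmap_one]
  constructor
  · -- linearity
    intro a Ψ Φ
    funext fd
    simp only [lowerAll, Pi.add_apply, Pi.smul_apply, smul_eq_mul]
    rw [show (∑ f : Fin r → Fin 2, (∏ i, lowerT c Y (f i) (fd i)) * (a * Ψ f + Φ f))
        = a * (∑ f : Fin r → Fin 2, (∏ i, lowerT c Y (f i) (fd i)) * Ψ f)
          + ∑ f : Fin r → Fin 2, (∏ i, lowerT c Y (f i) (fd i)) * Φ f from by
      rw [Finset.mul_sum, ← Finset.sum_add_distrib]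
      exact Finset.sum_congr rfl fun f _ => by ring]
    ring
  · -- bijectivity
    rw [hlA]
    refine ⟨LAux.Tmap_mapsTo r _ _, fun Ψ₁ _ Ψ₂ _ h => ?_, fun Φ hΦ => ?_⟩
    · have := congrArg (LAux.Tmap r (lowerT c Y)⁻¹ ((Real.sqrt 2 : ℂ) ^ r)⁻¹) h
      rwa [hli, hli] at this
    · exact ⟨LAux.Tmap r (lowerT c Y)⁻¹ ((Real.sqrt 2 : ℂ) ^ r)⁻¹ Φ,
        LAux.Tmap_mapsTo r _ _ hΦ, hri Φ⟩
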